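/- arXiv:2511.04446 — 5 statements merged into one kernel-verified Lean document; each statement's English description precedes it below -/
import Mathlib

section
/- Every POVM whose effects all commute pairwise and are simultaneously diagonal in some orthonormal basis is projectively simulable. -/
open Matrix BigOperators ComplexOrder

noncomputable section

/-- A POVM: positive semidefinite effects summing to the identity. -/
def IsPOVM (d n : ℕ) (M : Fin n → Matrix (Fin d) (Fin d) ℂ) : Prop :=
  (∀ i, (M i).PosSemidef) ∧ ∑ i, M i = 1

/-- A projective measurement. -/
def IsProjMeas (d n : ℕ) (P : Fin n → Matrix (Fin d) (Fin d) ℂ) : Prop :=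
  (∀ i, (P i)ᴴ = P i) ∧
  (∀ i j, P i * P j = if i = j then P i else 0) ∧
  ∑ i, P i = 1

/-- Projective simulability. -/
def Simulable (d n : ℕ) (M : Fin n → Matrix (Fin d) (Fin d) ℂ) : Prop :=
  ∃ (N : ℕ) (p : Fin N → ℝ) (P : Fin N → Fin n → Matrix (Fin d) (Fin d) ℂ),
    (∀ k, 0 ≤ p k) ∧ (∑ k, p k = 1) ∧ (∀ k, IsProjMeas d n (P k)) ∧
    (∀ i, M i = ∑ k, (p k : ℂ) • P k i)

/-!
Conjugating by the unitary `U` reduces the statement to diagonal effects `diagonal (q i)`, where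
`q` is a column-stochastic real matrix. Drawing each value `f x` of a map `f : Fin d → Fin n`
independently according to column `x` of `q` gives weights `∏ x, q (f x) x` on the deterministic
maps `f`, whose marginals recover `q`; each `f` yields the diagonal projective measurement
`i ↦ diagonal (indicator of f⁻¹ {i})`. Conjugation by `U` is a unital ⋆-algebra automorphism,
so it carries this decomposition back to `M`.
-/

open Finset

section ProductWeights

variable {ι κ R : Type*} [Fintype ι] [Fintype κ] [DecidableEq κ] [CommSemiring R]

theorem sum_prod_eq_one_of_sum_eq_one (q : ι → κ → R) (hq : ∀ x, ∑ i, q i x = 1) :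
    ∑ f : κ → ι, ∏ y, q (f y) y = 1 := by
  rw [← Fintype.prod_sum (fun y i => q i y)]
  simp [hq]

theorem sum_filter_prod_eq_of_sum_eq_one [DecidableEq ι] (q : ι → κ → R)
    (hq : ∀ x, ∑ i, q i x = 1) (x : κ) (i : ι) :
    ∑ f : κ → ι with f x = i, ∏ y, q (f y) y = q i x := by
  have hfilter : ({f : κ → ι | f x = i} : Finset _) =
      Fintype.piFinset fun y => if y = x then {i} else univ := by
    ext f
    simp only [mem_filter, mem_univ, true_and, Fintype.mem_piFinset]
    refine ⟨fun h y => ?_, fun h => by simpa using h x⟩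
    split_ifs with hy <;> simp [hy, h]
  rw [hfilter, ← prod_univ_sum (fun y => if y = x then {i} else univ) (fun y j => q j y),
    prod_eq_single x]
  · simp
  · intro y _ hy
    simp [hy, hq]
  · simp

end ProductWeights

section Measurements

variable {d n : ℕ}

theorem simulable_of_fintype {ι : Type*} [Fintype ι] (M : Fin n → Matrix (Fin d) (Fin d) ℂ)
    (p : ι → ℝ) (P : ι → Fin n → Matrix (Fin d) (Fin d) ℂ) (hp : ∀ k, 0 ≤ p k)
    (hp_sum : ∑ k, p k = 1) (hP : ∀ k, IsProjMeas d n (P k))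
    (hM : ∀ i, M i = ∑ k, (p k : ℂ) • P k i) : Simulable d n M := by
  let e := Fintype.equivFin ι
  refine ⟨Fintype.card ι, p ∘ e.symm, P ∘ e.symm, fun k => hp _, ?_, fun k => hP _, fun i => ?_⟩
  · rwa [Function.comp_def, e.symm.sum_comp p]
  · rw [hM i]
    exact (e.symm.sum_comp fun k => (p k : ℂ) • P k i).symm

section Map

variable {F : Type*} [FunLike F (Matrix (Fin d) (Fin d) ℂ) (Matrix (Fin d) (Fin d) ℂ)]
  [StarHomClass F (Matrix (Fin d) (Fin d) ℂ) (Matrix (Fin d) (Fin d) ℂ)]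

theorem IsProjMeas.map [RingHomClass F (Matrix (Fin d) (Fin d) ℂ) (Matrix (Fin d) (Fin d) ℂ)]
    {P : Fin n → Matrix (Fin d) (Fin d) ℂ} (hP : IsProjMeas d n P) (φ : F) :
    IsProjMeas d n fun i => φ (P i) := by
  obtain ⟨hherm, horth, hsum⟩ := hP
  refine ⟨fun i => ?_, fun i j => ?_, ?_⟩
  · rw [← star_eq_conjTranspose, ← map_star, star_eq_conjTranspose, hherm]
  · rw [← map_mul, horth, apply_ite φ, map_zero]
  · rw [← map_sum, hsum, map_one]

theorem Simulable.map [AlgHomClass F ℂ (Matrix (Fin d) (Fin d) ℂ) (Matrix (Fin d) (Fin d) ℂ)]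
    {M : Fin n → Matrix (Fin d) (Fin d) ℂ} (hM : Simulable d n M) (φ : F) :
    Simulable d n fun i => φ (M i) := by
  obtain ⟨N, p, P, hp, hp_sum, hP, hMP⟩ := hM
  refine ⟨N, p, fun k i => φ (P k i), hp, hp_sum, fun k => (hP k).map φ, fun i => ?_⟩
  simp only [hMP i, map_sum, map_smul]

end Map

theorem IsPOVM.conj_unitary {M : Fin n → Matrix (Fin d) (Fin d) ℂ} (hM : IsPOVM d n M)
    (u : unitaryGroup (Fin d) ℂ) : IsPOVM d n fun i => Unitary.conjStarAlgAut ℂ _ u (M i) := by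
  obtain ⟨hpos, hsum⟩ := hM
  refine ⟨fun i => ?_, ?_⟩
  · dsimp only
    rw [Unitary.conjStarAlgAut_apply]
    exact (hpos i).mul_mul_conjTranspose_same _
  · rw [← map_sum, hsum, map_one]

theorem IsPOVM.exists_real_of_diagonal {c : Fin n → Fin d → ℂ}
    (h : IsPOVM d n fun i => diagonal (c i)) :
    ∃ q : Fin n → Fin d → ℝ, (∀ i x, 0 ≤ q i x) ∧ (∀ x, ∑ i, q i x = 1) ∧
      c = fun i x => (q i x : ℂ) := by
  have hc : ∀ i x, 0 ≤ c i x := fun i => posSemidef_diagonal_iff.mp (h.1 i)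
  have hc_sum : ∀ x, ∑ i, c i x = 1 := fun x => by
    simpa [Matrix.sum_apply] using congrFun (congrFun h.2 x) x
  refine ⟨fun i x => (c i x).re, fun i x => (Complex.nonneg_iff.mp (hc i x)).1,
    fun x => by simpa using congrArg Complex.re (hc_sum x),
    funext fun i => funext fun x => Complex.eq_re_of_ofReal_le (hc i x)⟩

def diagonalProjMeas (f : Fin d → Fin n) (i : Fin n) : Matrix (Fin d) (Fin d) ℂ :=
  diagonal fun x => if f x = i then 1 else 0

theorem isProjMeas_diagonalProjMeas (f : Fin d → Fin n) :
    IsProjMeas d n (diagonalProjMeas f) := by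
  refine ⟨fun i => ?_, fun i j => ?_, ?_⟩
  · rw [diagonalProjMeas, diagonal_conjTranspose]
    congr 1
    ext x
    simp [apply_ite]
  · rw [diagonalProjMeas, diagonalProjMeas, diagonal_mul_diagonal]
    split_ifs with hij
    · subst hij
      congr 1
      ext x
      simp
    · rw [← diagonal_zero]
      congr 1
      ext x
      split_ifs <;> simp_all
  · simp_rw [diagonalProjMeas, ← diagonalAlgHom_apply ℂ, ← map_sum, ← map_one (diagonalAlgHom ℂ)]
    congr 1
    ext x
    simp

theorem simulable_diagonal (q : Fin n → Fin d → ℝ) (hq : ∀ i x, 0 ≤ q i x)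
    (hq_sum : ∀ x, ∑ i, q i x = 1) : Simulable d n fun i => diagonal fun x => (q i x : ℂ) := by
  refine simulable_of_fintype _ (fun f : Fin d → Fin n => ∏ y, q (f y) y) diagonalProjMeas
    (fun f => prod_nonneg fun y _ => hq _ _) (sum_prod_eq_one_of_sum_eq_one q hq_sum)
    isProjMeas_diagonalProjMeas fun i => ?_
  simp_rw [diagonalProjMeas, ← diagonalAlgHom_apply ℂ, ← map_smul, ← map_sum]
  congr 1
  ext x
  simp only [Finset.sum_apply, Pi.smul_apply, smul_eq_mul, mul_boole]
  rw [← sum_filter_prod_eq_of_sum_eq_one q hq_sum x i, sum_filter, Complex.ofReal_sum]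
  refine sum_congr rfl fun f _ => ?_
  split_ifs <;> simp

end Measurements

theorem commuting_diagonal_povm_simulable_general (d n : ℕ)
    (M : Fin n → Matrix (Fin d) (Fin d) ℂ) (hM : IsPOVM d n M)
    (hdiag : ∃ U : Matrix (Fin d) (Fin d) ℂ, U ∈ Matrix.unitaryGroup (Fin d) ℂ ∧
      ∀ i, ∃ c : Fin d → ℂ, M i = U * Matrix.diagonal c * Uᴴ) :
    Simulable d n M := by
  obtain ⟨U, hU, hdiag⟩ := hdiag
  lift U to unitaryGroup (Fin d) ℂ using hU
  choose c hc using hdiag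
  have hM_eq : M = fun i => Unitary.conjStarAlgAut ℂ _ U (diagonal (c i)) := funext hc
  have hD : IsPOVM d n fun i => diagonal (c i) := by
    simpa only [hM_eq, ← Unitary.conjStarAlgAut_symm, StarAlgEquiv.symm_apply_apply] using
      hM.conj_unitary (star U)
  obtain ⟨q, hq, hq_sum, rfl⟩ := hD.exists_real_of_diagonal
  rw [hM_eq]
  exact (simulable_diagonal q hq hq_sum).map (Unitary.conjStarAlgAut ℂ _ U)

/-- Every POVM whose effects commute pairwise and are simultaneously diagonal in some
orthonormal basis is projectively simulable. -/
theorem commuting_diagonal_povm_simulable (d n : ℕ)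
    (M : Fin n → Matrix (Fin d) (Fin d) ℂ) (hM : IsPOVM d n M)
    (hcomm : ∀ i j, M i * M j = M j * M i)
    (hdiag : ∃ U : Matrix (Fin d) (Fin d) ℂ, U ∈ Matrix.unitaryGroup (Fin d) ℂ ∧
      ∀ i, ∃ c : Fin d → ℂ, M i = U * Matrix.diagonal c * Uᴴ) :
    Simulable d n M :=
  commuting_diagonal_povm_simulable_general d n M hM hdiag
end
end

section
/- If M = (M_0,...,M_{n-1}) is a projectively simulable POVM with decomposition M_i = Σ_k p_k P_i^k, then the bipartite operators R_{ij} = Σ_k p_k (P_i^k ⊗ P_j^k) satisfy: (a) R_{ij} ≥ 0; (b) Σ_i R_{ij} = I ⊗ M_j; (c) Σ_j R_{ij} = M_i ⊗ I; (d) Tr_1(V R_{ij}) = 0 for i ≠ j, where V is the swap operator. -/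
/-!
Each `R_{ij}` is a nonnegative combination of the positive operators `P_i^k ⊗ P_j^k`, and the marginals
come from `Σ_i P_i^k = I`. For the swap constraint, `Tr_1 (V (A ⊗ B)) = A B`, so `Tr_1 (V R_{ij})`
is a combination of the products `P_i^k P_j^k`, which vanish for `i ≠ j`.
-/

open Matrix Kronecker BigOperators ComplexOrder

noncomputable section

/-- The swap operator `V = Σ_{a,b} |ab⟩⟨ba|` on `ℂ^d ⊗ ℂ^d`. -/
def swapOp (d : ℕ) : Matrix (Fin d × Fin d) (Fin d × Fin d) ℂ :=
  fun p q => if p.1 = q.2 ∧ p.2 = q.1 then 1 else 0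

/-- Partial trace over the first tensor factor. -/
def ptrace1 (d : ℕ) (M : Matrix (Fin d × Fin d) (Fin d × Fin d) ℂ) :
    Matrix (Fin d) (Fin d) ℂ :=
  fun i j => ∑ k, M (k, i) (k, j)

theorem Matrix.sum_kronecker {ι l m n q α : Type*} [NonUnitalNonAssocSemiring α]
    (s : Finset ι) (A : ι → Matrix l m α) (B : Matrix n q α) :
    (∑ i ∈ s, A i) ⊗ₖ B = ∑ i ∈ s, A i ⊗ₖ B := by
  ext
  simp [kroneckerMap_apply, sum_apply, Finset.sum_mul]

theorem Matrix.kronecker_sum {ι l m n q α : Type*} [NonUnitalNonAssocSemiring α]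
    (s : Finset ι) (A : Matrix l m α) (B : ι → Matrix n q α) :
    A ⊗ₖ (∑ i ∈ s, B i) = ∑ i ∈ s, A ⊗ₖ B i := by
  ext
  simp [kroneckerMap_apply, sum_apply, Finset.mul_sum]

namespace IsProjMeas

variable {d n : ℕ} {P : Fin n → Matrix (Fin d) (Fin d) ℂ}

theorem mul_self (hP : IsProjMeas d n P) (i : Fin n) : P i * P i = P i := by
  simpa using hP.2.1 i i

theorem mul_of_ne (hP : IsProjMeas d n P) {i j : Fin n} (hij : i ≠ j) : P i * P j = 0 := by
  simpa [hij] using hP.2.1 i j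

theorem sum_eq_one (hP : IsProjMeas d n P) : ∑ i, P i = 1 :=
  hP.2.2

theorem posSemidef (hP : IsProjMeas d n P) (i : Fin n) : (P i).PosSemidef := by
  have hPP : (P i)ᴴ * P i = P i := by rw [hP.1 i, hP.mul_self]
  simpa [hPP] using posSemidef_conjTranspose_mul_self (P i)

end IsProjMeas

theorem ptrace1_sum {d : ℕ} {ι : Type*} (s : Finset ι)
    (X : ι → Matrix (Fin d × Fin d) (Fin d × Fin d) ℂ) :
    ptrace1 d (∑ k ∈ s, X k) = ∑ k ∈ s, ptrace1 d (X k) := by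
  ext
  simp only [ptrace1, Matrix.sum_apply]
  exact Finset.sum_comm

theorem ptrace1_smul {d : ℕ} (c : ℂ) (X : Matrix (Fin d × Fin d) (Fin d × Fin d) ℂ) :
    ptrace1 d (c • X) = c • ptrace1 d X := by
  ext
  simp [ptrace1, Finset.mul_sum]

theorem swapOp_mul_apply {d : ℕ} (X : Matrix (Fin d × Fin d) (Fin d × Fin d) ℂ)
    (a b : Fin d) (q : Fin d × Fin d) : (swapOp d * X) (a, b) q = X (b, a) q := by
  rw [mul_apply, Fintype.sum_eq_single (b, a)]
  · simp [swapOp]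
  · rintro ⟨x, y⟩ hxy
    rw [swapOp, if_neg, zero_mul]
    rintro ⟨rfl, rfl⟩
    exact hxy rfl

theorem ptrace1_swapOp_mul_kronecker {d : ℕ} (A B : Matrix (Fin d) (Fin d) ℂ) :
    ptrace1 d (swapOp d * (A ⊗ₖ B)) = A * B := by
  ext a b
  simp_rw [ptrace1, swapOp_mul_apply, kroneckerMap_apply, mul_apply]

section JointOp

variable {d n : ℕ} {κ : Type*} [Fintype κ] {p : κ → ℝ} {P : κ → Fin n → Matrix (Fin d) (Fin d) ℂ}

variable (p P) in
def jointOp (i j : Fin n) : Matrix (Fin d × Fin d) (Fin d × Fin d) ℂ :=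
  ∑ k, (p k : ℂ) • (P k i ⊗ₖ P k j)

theorem jointOp_posSemidef (hp : ∀ k, 0 ≤ p k) (hP : ∀ k, IsProjMeas d n (P k)) (i j : Fin n) :
    (jointOp p P i j).PosSemidef :=
  posSemidef_sum _ fun k _ =>
    ((hP k).posSemidef i |>.kronecker <| (hP k).posSemidef j).smul (Complex.zero_le_real.mpr (hp k))

theorem sum_jointOp_left (hP : ∀ k, IsProjMeas d n (P k)) (j : Fin n) :
    ∑ i, jointOp p P i j = 1 ⊗ₖ ∑ k, (p k : ℂ) • P k j := by
  simp only [jointOp, kronecker_sum, kronecker_smul]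
  rw [Finset.sum_comm]
  refine Finset.sum_congr rfl fun k _ => ?_
  rw [← Finset.smul_sum, ← sum_kronecker, (hP k).sum_eq_one]

theorem sum_jointOp_right (hP : ∀ k, IsProjMeas d n (P k)) (i : Fin n) :
    ∑ j, jointOp p P i j = (∑ k, (p k : ℂ) • P k i) ⊗ₖ 1 := by
  simp only [jointOp, sum_kronecker, smul_kronecker]
  rw [Finset.sum_comm]
  refine Finset.sum_congr rfl fun k _ => ?_
  rw [← Finset.smul_sum, ← kronecker_sum, (hP k).sum_eq_one]

theorem ptrace1_swapOp_mul_jointOp_of_ne (hP : ∀ k, IsProjMeas d n (P k)) {i j : Fin n}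
    (hij : i ≠ j) : ptrace1 d (swapOp d * jointOp p P i j) = 0 := by
  simp only [jointOp, Matrix.mul_sum, Matrix.mul_smul, ptrace1_sum, ptrace1_smul,
    ptrace1_swapOp_mul_kronecker, (hP _).mul_of_ne hij, smul_zero, Finset.sum_const_zero]

end JointOp

theorem simulable_R_matrix_constraints_general (d n N : ℕ)
    (p : Fin N → ℝ) (hp0 : ∀ k, 0 ≤ p k)
    (P : Fin N → Fin n → Matrix (Fin d) (Fin d) ℂ)
    (hP : ∀ k, IsProjMeas d n (P k))
    (M : Fin n → Matrix (Fin d) (Fin d) ℂ)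
    (hM : ∀ i, M i = ∑ k, (p k : ℂ) • P k i)
    (R : Fin n → Fin n → Matrix (Fin d × Fin d) (Fin d × Fin d) ℂ)
    (hR : ∀ i j, R i j = ∑ k, (p k : ℂ) • (P k i ⊗ₖ P k j)) :
    (∀ i j, (R i j).PosSemidef) ∧
    (∀ j, ∑ i, R i j = (1 : Matrix (Fin d) (Fin d) ℂ) ⊗ₖ M j) ∧
    (∀ i, ∑ j, R i j = M i ⊗ₖ (1 : Matrix (Fin d) (Fin d) ℂ)) ∧
    (∀ i j, i ≠ j → ptrace1 d (swapOp d * R i j) = 0) := by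
  obtain rfl : M = fun i => ∑ k, (p k : ℂ) • P k i := funext hM
  obtain rfl : R = jointOp p P := funext fun i => funext (hR i)
  exact ⟨jointOp_posSemidef hp0 hP, sum_jointOp_left hP, sum_jointOp_right hP,
    fun _ _ => ptrace1_swapOp_mul_jointOp_of_ne hP⟩

/-- For a projectively simulable POVM `M_i = Σ_k p_k P_i^k`, the bipartite operators
`R_{ij} = Σ_k p_k (P_i^k ⊗ P_j^k)` satisfy positivity, the marginal conditions,
and the swap constraint. -/
theorem simulable_R_matrix_constraints (d n N : ℕ)
    (p : Fin N → ℝ) (hp0 : ∀ k, 0 ≤ p k) (hp1 : ∑ k, p k = 1)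
    (P : Fin N → Fin n → Matrix (Fin d) (Fin d) ℂ)
    (hP : ∀ k, IsProjMeas d n (P k))
    (M : Fin n → Matrix (Fin d) (Fin d) ℂ)
    (hM : ∀ i, M i = ∑ k, (p k : ℂ) • P k i)
    (R : Fin n → Fin n → Matrix (Fin d × Fin d) (Fin d × Fin d) ℂ)
    (hR : ∀ i j, R i j = ∑ k, (p k : ℂ) • (P k i ⊗ₖ P k j)) :
    (∀ i j, (R i j).PosSemidef) ∧
    (∀ j, ∑ i, R i j = (1 : Matrix (Fin d) (Fin d) ℂ) ⊗ₖ M j) ∧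
    (∀ i, ∑ j, R i j = M i ⊗ₖ (1 : Matrix (Fin d) (Fin d) ℂ)) ∧
    (∀ i j, i ≠ j → ptrace1 d (swapOp d * R i j) = 0) :=
  simulable_R_matrix_constraints_general d n N p hp0 P hP M hM R hR
end
end

section
/- If M = (M_0,...,M_{n-1}) is a projectively simulable POVM with decomposition M_i = Σ_k p_k P_i^k, then the tripartite operators R_{ijl} = Σ_k p_k (P_i^k ⊗ P_j^k ⊗ P_l^k) are positive semidefinite, satisfy marginal conditions in each slot (summing over any one index yields the identity in that slot tensored with the corresponding bipartite R matrix, e.g. Σ_i R_{ijl} = I ⊗ R_{jl}), and satisfy Tr_b(V_{(ab)} R_{ijl}) = 0 whenever the indices in positions a and b differ. -/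
open Matrix Kronecker BigOperators ComplexOrder

noncomputable section

/-- Swap of tensor factors 1 and 2 on `(ℂ^d)^{⊗3}`. -/
def V12 (d : ℕ) : Matrix (Fin d × Fin d × Fin d) (Fin d × Fin d × Fin d) ℂ :=
  fun p q => if p.1 = q.2.1 ∧ p.2.1 = q.1 ∧ p.2.2 = q.2.2 then 1 else 0

/-- Swap of tensor factors 1 and 3 on `(ℂ^d)^{⊗3}`. -/
def V13 (d : ℕ) : Matrix (Fin d × Fin d × Fin d) (Fin d × Fin d × Fin d) ℂ :=
  fun p q => if p.1 = q.2.2 ∧ p.2.1 = q.2.1 ∧ p.2.2 = q.1 then 1 else 0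

/-- Swap of tensor factors 2 and 3 on `(ℂ^d)^{⊗3}`. -/
def V23 (d : ℕ) : Matrix (Fin d × Fin d × Fin d) (Fin d × Fin d × Fin d) ℂ :=
  fun p q => if p.1 = q.1 ∧ p.2.1 = q.2.2 ∧ p.2.2 = q.2.1 then 1 else 0

/-- Partial trace over the second tensor factor of a tripartite matrix. -/
def ptr3_2 (d : ℕ) (M : Matrix (Fin d × Fin d × Fin d) (Fin d × Fin d × Fin d) ℂ) :
    Matrix (Fin d × Fin d) (Fin d × Fin d) ℂ :=
  fun i j => ∑ k, M (i.1, k, i.2) (j.1, k, j.2)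

/-- Partial trace over the third tensor factor of a tripartite matrix. -/
def ptr3_3 (d : ℕ) (M : Matrix (Fin d × Fin d × Fin d) (Fin d × Fin d × Fin d) ℂ) :
    Matrix (Fin d × Fin d) (Fin d × Fin d) ℂ :=
  fun i j => ∑ k, M (i.1, i.2, k) (j.1, j.2, k)

lemma kron_conjT {m n : Type*} [Fintype m] [Fintype n]
    (A : Matrix m m ℂ) (B : Matrix n n ℂ) : (A ⊗ₖ B)ᴴ = Aᴴ ⊗ₖ Bᴴ := by
  ext ⟨a, b⟩ ⟨c, e⟩
  simp [conjTranspose_apply, mul_comm]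

lemma psd_zero' {m : Type*} [Fintype m] : (0 : Matrix m m ℂ).PosSemidef := by
  constructor
  · simp [Matrix.IsHermitian]
  · intro x; simp

lemma psd_add' {m : Type*} [Fintype m] {A B : Matrix m m ℂ}
    (hA : A.PosSemidef) (hB : B.PosSemidef) : (A + B).PosSemidef := by
  refine ⟨hA.1.add hB.1, fun x => ?_⟩
  exact (hA.add hB).2 x

lemma psd_smul' {m : Type*} [Fintype m] {A : Matrix m m ℂ} (hA : A.PosSemidef)
    {c : ℝ} (hc : 0 ≤ c) : ((c : ℂ) • A).PosSemidef := by
  refine ⟨?_, fun x => ?_⟩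
  · unfold Matrix.IsHermitian
    rw [conjTranspose_smul, hA.1.eq, Complex.star_def, Complex.conj_ofReal]
  · exact (hA.smul (Complex.zero_le_real.2 hc)).2 x

lemma psd_sum' {m ι : Type*} [Fintype m] {s : Finset ι} {A : ι → Matrix m m ℂ}
    (h : ∀ i ∈ s, (A i).PosSemidef) : (∑ i ∈ s, A i).PosSemidef :=
  Finset.sum_induction A _ (fun _ _ => psd_add') psd_zero' h

lemma psd_of_proj {m : Type*} [Fintype m] [DecidableEq m] {X : Matrix m m ℂ}
    (h1 : Xᴴ = X) (h2 : X * X = X) : X.PosSemidef := by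
  have h : X = Xᴴ * X := by rw [h1, h2]
  rw [h]; exact posSemidef_conjTranspose_mul_self X

lemma V12_mul_apply (d : ℕ) (R : Matrix (Fin d × Fin d × Fin d) (Fin d × Fin d × Fin d) ℂ)
    (a k b : Fin d) (q : Fin d × Fin d × Fin d) :
    (V12 d * R) (a, k, b) q = R (k, a, b) q := by
  rw [Matrix.mul_apply, Finset.sum_eq_single (k, a, b)]
  · simp [V12]
  · rintro ⟨r1, r2, r3⟩ _ hr
    simp only [V12]
    rw [if_neg, zero_mul]
    rintro ⟨h1, h2, h3⟩
    exact hr (by simp_all [Prod.ext_iff])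
  · simp

lemma V13_mul_apply (d : ℕ) (R : Matrix (Fin d × Fin d × Fin d) (Fin d × Fin d × Fin d) ℂ)
    (a b m : Fin d) (q : Fin d × Fin d × Fin d) :
    (V13 d * R) (a, b, m) q = R (m, b, a) q := by
  rw [Matrix.mul_apply, Finset.sum_eq_single (m, b, a)]
  · simp [V13]
  · rintro ⟨r1, r2, r3⟩ _ hr
    simp only [V13]
    rw [if_neg, zero_mul]
    rintro ⟨h1, h2, h3⟩
    exact hr (by simp_all [Prod.ext_iff])
  · simp

lemma V23_mul_apply (d : ℕ) (R : Matrix (Fin d × Fin d × Fin d) (Fin d × Fin d × Fin d) ℂ)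
    (a b m : Fin d) (q : Fin d × Fin d × Fin d) :
    (V23 d * R) (a, b, m) q = R (a, m, b) q := by
  rw [Matrix.mul_apply, Finset.sum_eq_single (a, m, b)]
  · simp [V23]
  · rintro ⟨r1, r2, r3⟩ _ hr
    simp only [V23]
    rw [if_neg, zero_mul]
    rintro ⟨h1, h2, h3⟩
    exact hr (by simp_all [Prod.ext_iff])
  · simp

/-- For a projectively simulable POVM, the tripartite operators
`R_{ijl} = Σ_k p_k (P_i^k ⊗ P_j^k ⊗ P_l^k)` are positive semidefinite, summing over any one
index yields the identity in that slot tensored with the corresponding bipartite operator,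
and they obey the swap constraints `Tr_b(V_{(ab)} R_{ijl}) = 0` whenever the indices in
positions `a` and `b` differ. -/
theorem simulable_tripartite_R_constraints (d n N : ℕ)
    (p : Fin N → ℝ) (hp0 : ∀ k, 0 ≤ p k) (hp1 : ∑ k, p k = 1)
    (P : Fin N → Fin n → Matrix (Fin d) (Fin d) ℂ)
    (hP : ∀ k, IsProjMeas d n (P k))
    (M : Fin n → Matrix (Fin d) (Fin d) ℂ)
    (hM : ∀ i, M i = ∑ k, (p k : ℂ) • P k i)
    (R : Fin n → Fin n → Fin n → Matrix (Fin d × Fin d × Fin d) (Fin d × Fin d × Fin d) ℂ)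
    (hR : ∀ i j l, R i j l = ∑ k, (p k : ℂ) • (P k i ⊗ₖ (P k j ⊗ₖ P k l))) :
    (∀ i j l, (R i j l).PosSemidef) ∧
    (∀ j l, ∑ i, R i j l =
      (1 : Matrix (Fin d) (Fin d) ℂ) ⊗ₖ (∑ k, (p k : ℂ) • (P k j ⊗ₖ P k l))) ∧
    (∀ i l, ∑ j, R i j l =
      ∑ k, (p k : ℂ) • (P k i ⊗ₖ ((1 : Matrix (Fin d) (Fin d) ℂ) ⊗ₖ P k l))) ∧
    (∀ i j, ∑ l, R i j l =
      ∑ k, (p k : ℂ) • (P k i ⊗ₖ (P k j ⊗ₖ (1 : Matrix (Fin d) (Fin d) ℂ)))) ∧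
    (∀ i j l, i ≠ j → ptr3_2 d (V12 d * R i j l) = 0) ∧
    (∀ i j l, i ≠ l → ptr3_3 d (V13 d * R i j l) = 0) ∧
    (∀ i j l, j ≠ l → ptr3_3 d (V23 d * R i j l) = 0) := by
  -- basic facts about the projectors
  have hHerm : ∀ k i, (P k i)ᴴ = P k i := fun k => (hP k).1
  have hOrth : ∀ k i j, P k i * P k j = if i = j then P k i else 0 := fun k => (hP k).2.1
  have hSum : ∀ k, ∑ i, P k i = (1 : Matrix (Fin d) (Fin d) ℂ) := fun k => (hP k).2.2
  have hIdem : ∀ k i, P k i * P k i = P k i := by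
    intro k i; simpa using hOrth k i i
  refine ⟨?_, ?_, ?_, ?_, ?_, ?_, ?_⟩
  · -- positive semidefiniteness
    intro i j l
    rw [hR]
    have hQ : ∀ k, (P k i ⊗ₖ (P k j ⊗ₖ P k l)).PosSemidef := by
      intro k
      apply psd_of_proj
      · rw [kron_conjT, kron_conjT, hHerm, hHerm, hHerm]
      · rw [← mul_kronecker_mul, ← mul_kronecker_mul, hIdem, hIdem, hIdem]
    exact psd_sum' fun k _ => psd_smul' (hQ k) (hp0 k)
  · -- sum over i
    intro j l
    ext ⟨a, b1, b2⟩ ⟨c, e1, e2⟩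
    simp only [hR, Matrix.sum_apply, Matrix.smul_apply, kroneckerMap_apply, smul_eq_mul]
    conv_lhs => rw [Finset.sum_comm]
    conv_rhs => rw [Finset.mul_sum]
    refine Finset.sum_congr rfl fun k _ => ?_
    have h1 : ∑ i, (P k i) a c = (1 : Matrix (Fin d) (Fin d) ℂ) a c := by
      rw [← Matrix.sum_apply a c Finset.univ (fun i => P k i), hSum]
    calc ∑ i, (p k : ℂ) * ((P k i) a c * ((P k j) b1 e1 * (P k l) b2 e2))
        = (∑ i, (P k i) a c) * ((p k : ℂ) * ((P k j) b1 e1 * (P k l) b2 e2)) := by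
          rw [Finset.sum_mul]; refine Finset.sum_congr rfl fun i _ => by ring
      _ = _ := by rw [h1]
  · -- sum over j
    intro i l
    ext ⟨a, b1, b2⟩ ⟨c, e1, e2⟩
    simp only [hR, Matrix.sum_apply, Matrix.smul_apply, kroneckerMap_apply, smul_eq_mul]
    conv_lhs => rw [Finset.sum_comm]
    refine Finset.sum_congr rfl fun k _ => ?_
    have h1 : ∑ j, (P k j) b1 e1 = (1 : Matrix (Fin d) (Fin d) ℂ) b1 e1 := by
      rw [← Matrix.sum_apply b1 e1 Finset.univ (fun j => P k j), hSum]
    calc ∑ j, (p k : ℂ) * ((P k i) a c * ((P k j) b1 e1 * (P k l) b2 e2))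
        = (∑ j, (P k j) b1 e1) * ((p k : ℂ) * ((P k i) a c * (P k l) b2 e2)) := by
          rw [Finset.sum_mul]; refine Finset.sum_congr rfl fun j _ => by ring
      _ = _ := by rw [h1]; ring
  · -- sum over l
    intro i j
    ext ⟨a, b1, b2⟩ ⟨c, e1, e2⟩
    simp only [hR, Matrix.sum_apply, Matrix.smul_apply, kroneckerMap_apply, smul_eq_mul]
    conv_lhs => rw [Finset.sum_comm]
    refine Finset.sum_congr rfl fun k _ => ?_
    have h1 : ∑ l, (P k l) b2 e2 = (1 : Matrix (Fin d) (Fin d) ℂ) b2 e2 := by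
      rw [← Matrix.sum_apply b2 e2 Finset.univ (fun l => P k l), hSum]
    calc ∑ l, (p k : ℂ) * ((P k i) a c * ((P k j) b1 e1 * (P k l) b2 e2))
        = (∑ l, (P k l) b2 e2) * ((p k : ℂ) * ((P k i) a c * (P k j) b1 e1)) := by
          rw [Finset.sum_mul]; refine Finset.sum_congr rfl fun l _ => by ring
      _ = _ := by rw [h1]; ring
  · -- swap 12
    intro i j l hij
    ext ⟨a, b⟩ ⟨c, e⟩
    simp only [ptr3_2, Matrix.zero_apply]
    have key : ∀ m : Fin d, (V12 d * R i j l) (a, m, b) (c, m, e) = R i j l (m, a, b) (c, m, e) :=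
      fun m => V12_mul_apply d _ a m b _
    simp only [key]
    simp only [hR, Matrix.sum_apply, Matrix.smul_apply, kroneckerMap_apply, smul_eq_mul]
    rw [Finset.sum_comm]
    refine Finset.sum_eq_zero fun k _ => ?_
    have h0 : ∑ m, (P k j) a m * (P k i) m c = 0 := by
      have h := hOrth k j i
      rw [if_neg (Ne.symm hij)] at h
      have := congrArg (fun X => X a c) h
      simpa [Matrix.mul_apply] using this
    calc ∑ m, (p k : ℂ) * ((P k i) m c * ((P k j) a m * (P k l) b e))
        = (∑ m, (P k j) a m * (P k i) m c) * ((p k : ℂ) * (P k l) b e) := by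
          rw [Finset.sum_mul]; refine Finset.sum_congr rfl fun m _ => by ring
      _ = 0 := by rw [h0, zero_mul]
  · -- swap 13
    intro i j l hil
    ext ⟨a, b⟩ ⟨c, e⟩
    simp only [ptr3_3, Matrix.zero_apply]
    have key : ∀ m : Fin d, (V13 d * R i j l) (a, b, m) (c, e, m) = R i j l (m, b, a) (c, e, m) :=
      fun m => V13_mul_apply d _ a b m _
    simp only [key]
    simp only [hR, Matrix.sum_apply, Matrix.smul_apply, kroneckerMap_apply, smul_eq_mul]
    rw [Finset.sum_comm]
    refine Finset.sum_eq_zero fun k _ => ?_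
    have h0 : ∑ m, (P k l) a m * (P k i) m c = 0 := by
      have h := hOrth k l i
      rw [if_neg (Ne.symm hil)] at h
      have := congrArg (fun X => X a c) h
      simpa [Matrix.mul_apply] using this
    calc ∑ m, (p k : ℂ) * ((P k i) m c * ((P k j) b e * (P k l) a m))
        = (∑ m, (P k l) a m * (P k i) m c) * ((p k : ℂ) * (P k j) b e) := by
          rw [Finset.sum_mul]; refine Finset.sum_congr rfl fun m _ => by ring
      _ = 0 := by rw [h0, zero_mul]
  · -- swap 23
    intro i j l hjl
    ext ⟨a, b⟩ ⟨c, e⟩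
    simp only [ptr3_3, Matrix.zero_apply]
    have key : ∀ m : Fin d, (V23 d * R i j l) (a, b, m) (c, e, m) = R i j l (a, m, b) (c, e, m) :=
      fun m => V23_mul_apply d _ a b m _
    simp only [key]
    simp only [hR, Matrix.sum_apply, Matrix.smul_apply, kroneckerMap_apply, smul_eq_mul]
    rw [Finset.sum_comm]
    refine Finset.sum_eq_zero fun k _ => ?_
    have h0 : ∑ m, (P k l) b m * (P k j) m e = 0 := by
      have h := hOrth k l j
      rw [if_neg (Ne.symm hjl)] at h
      have := congrArg (fun X => X b e) h
      simpa [Matrix.mul_apply] using this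
    calc ∑ m, (p k : ℂ) * ((P k i) a c * ((P k j) m e * (P k l) b m))
        = (∑ m, (P k l) b m * (P k j) m e) * ((p k : ℂ) * (P k i) a c) := by
          rw [Finset.sum_mul]; refine Finset.sum_congr rfl fun m _ => by ring
      _ = 0 := by rw [h0, zero_mul]
end
end

section
/- The SDP hierarchy values are monotone: for every POVM M and every q ≥ 2, H_{q+1}(M) ≤ H_q(M), where H_m(M) is the optimal value of the level-m feasibility/maximization problem; the proof constructs from a feasible family {R_{i_1...i_{q+1}}} at level q+1 the family R_{i_1...i_q} := (1/d) Σ_{i_{q+1}} Tr_{q+1} R_{i_1...i_{q+1}}, which is feasible at level q with the same visibility t. -/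
open Matrix BigOperators ComplexOrder

noncomputable section

/-- The depolarizing noise map `Φ_t(X) = t X + (1-t) (Tr X / d) I`. -/
def depol (d : ℕ) (t : ℝ) (X : Matrix (Fin d) (Fin d) ℂ) : Matrix (Fin d) (Fin d) ℂ :=
  (t : ℂ) • X + ((1 - t : ℝ) : ℂ) • ((X.trace / (d : ℂ)) • (1 : Matrix (Fin d) (Fin d) ℂ))

/-- Tensor product of `m` matrices, as a matrix on `(ℂ^d)^{⊗m}`. -/
def tensorPow (d m : ℕ) (Q : Fin m → Matrix (Fin d) (Fin d) ℂ) :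
    Matrix (Fin m → Fin d) (Fin m → Fin d) ℂ :=
  fun f g => ∏ a, Q a (f a) (g a)

/-- The permutation operator `V_σ` on `(ℂ^d)^{⊗m}`. -/
def permOp (m d : ℕ) (σ : Equiv.Perm (Fin m)) :
    Matrix (Fin m → Fin d) (Fin m → Fin d) ℂ :=
  fun f g => if f = g ∘ σ.symm then 1 else 0

/-- Partial trace over the tensor factor `b` of an `m`-partite matrix. -/
def ptraceAt (m d : ℕ) (b : Fin m)
    (M : Matrix (Fin m → Fin d) (Fin m → Fin d) ℂ) :
    Matrix ({a : Fin m // a ≠ b} → Fin d) ({a : Fin m // a ≠ b} → Fin d) ℂ :=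
  fun f g => ∑ k : Fin d,
    M (fun a => if h : a = b then k else f ⟨a, h⟩)
      (fun a => if h : a = b then k else g ⟨a, h⟩)

/-- Feasibility of visibility `t` at level `m` of the SDP hierarchy: there exist positive
semidefinite operators `R_{i₁…i_m}` with the correct marginals of `Φ_t(M)` in each slot
and vanishing swapped partial traces whenever the swapped indices differ. -/
def Feasible (d n m : ℕ) (M : Fin n → Matrix (Fin d) (Fin d) ℂ) (t : ℝ) : Prop :=
  ∃ R : (Fin m → Fin n) → Matrix (Fin m → Fin d) (Fin m → Fin d) ℂ,
    (∀ ι, (R ι).PosSemidef) ∧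
    (∀ (j : Fin m) (v : Fin n),
      ∑ ι ∈ Finset.univ.filter (fun ι : Fin m → Fin n => ι j = v), R ι =
        tensorPow d m (fun a => if a = j then depol d t (M v) else 1)) ∧
    (∀ (a b : Fin m) (ι : Fin m → Fin n), a ≠ b → ι a ≠ ι b →
      ptraceAt m d b (permOp m d (Equiv.swap a b) * R ι) = 0)

/-- The value `H_m(M)` of the level-`m` SDP. -/
def Hval (d n m : ℕ) (M : Fin n → Matrix (Fin d) (Fin d) ℂ) : ℝ :=
  sSup {t : ℝ | 0 ≤ t ∧ t ≤ 1 ∧ Feasible d n m M t}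

/-!
A feasible family `R_{i₁…i_{q+1}}` at level `q + 1` yields the family
`R_{i₁…i_q} := (1/d) ∑_{i_{q+1}} Tr_{q+1} R_{i₁…i_{q+1}}` at level `q`, with the same visibility.
Positivity survives partial traces. The slot-`j` marginal of the new family is the partial trace
of the old slot-`j` marginal, whose last tensor factor is `I`, so its trace `d` cancels the `1/d`.
A swap of two slots `a, b ≤ q` commutes with tracing out slot `q + 1`, so the swapped partial
traces still vanish.
-/

section PartialTrace

variable {α R : Type*} [Fintype α] {q : ℕ}

theorem Fin.sum_univ_pi_snoc {β : Type*} [AddCommMonoid β] (φ : (Fin (q + 1) → α) → β) :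
    ∑ F, φ F = ∑ f : Fin q → α, ∑ k, φ (Fin.snoc f k) := by
  rw [← (Fin.snocEquiv fun _ => α).sum_comp, Fintype.sum_prod_type, Finset.sum_comm]
  rfl

theorem Fin.sum_filter_castSucc_snoc {β γ : Type*} [AddCommMonoid β] [DecidableEq γ]
    [Fintype γ] (φ : (Fin (q + 1) → γ) → β) (j : Fin q) (v : γ) :
    ∑ ι ∈ Finset.univ.filter (fun ι : Fin q → γ => ι j = v), ∑ w, φ (Fin.snoc ι w) =
      ∑ κ ∈ Finset.univ.filter (fun κ : Fin (q + 1) → γ => κ j.castSucc = v), φ κ := by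
  simp only [Finset.sum_filter,
    Fin.sum_univ_pi_snoc (fun κ => if κ j.castSucc = v then φ κ else 0),
    Fin.snoc_castSucc, Finset.sum_ite_irrel, Finset.sum_const_zero]

variable [CommSemiring R]

def ptraceLast :
    Matrix (Fin (q + 1) → α) (Fin (q + 1) → α) R →ₗ[R] Matrix (Fin q → α) (Fin q → α) R where
  toFun A := ∑ k, A.submatrix (Fin.snoc · k) (Fin.snoc · k)
  map_add' A B := by rw [← Finset.sum_add_distrib]; rfl
  map_smul' c A := by rw [Finset.smul_sum]; rfl

theorem ptraceLast_apply (A : Matrix (Fin (q + 1) → α) (Fin (q + 1) → α) R) (f g : Fin q → α) :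
    ptraceLast A f g = ∑ k, A (Fin.snoc f k) (Fin.snoc g k) := by
  simp [ptraceLast, Matrix.sum_apply]

theorem Matrix.PosSemidef.ptraceLast {𝕜 : Type*} [CommRing 𝕜] [PartialOrder 𝕜] [StarRing 𝕜]
    [StarOrderedRing 𝕜] {A : Matrix (Fin (q + 1) → α) (Fin (q + 1) → α) 𝕜}
    (hA : A.PosSemidef) : (ptraceLast A).PosSemidef :=
  posSemidef_sum _ fun _ _ => hA.submatrix _

end PartialTrace

theorem ptraceLast_tensorPow (d q : ℕ) (Q : Fin (q + 1) → Matrix (Fin d) (Fin d) ℂ) :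
    ptraceLast (tensorPow d (q + 1) Q) =
      (Q (Fin.last q)).trace • tensorPow d q (fun a => Q a.castSucc) := by
  ext f g
  simp [ptraceLast_apply, tensorPow, Fin.prod_univ_castSucc, Matrix.trace, Finset.sum_mul,
    mul_comm]

theorem permOp_mul_apply (m d : ℕ) (σ : Equiv.Perm (Fin m))
    (X : Matrix (Fin m → Fin d) (Fin m → Fin d) ℂ) (f g : Fin m → Fin d) :
    (permOp m d σ * X) f g = X (f ∘ σ) g := by
  simp [Matrix.mul_apply, permOp, Equiv.eq_comp_symm]

theorem Fin.snoc_comp_swap_castSucc {α : Type*} {q : ℕ} (a b : Fin q) (u : Fin q → α) (l : α) :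
    (Fin.snoc u l : Fin (q + 1) → α) ∘ Equiv.swap a.castSucc b.castSucc =
      Fin.snoc (u ∘ Equiv.swap a b) l := by
  funext x
  refine Fin.lastCases ?_ (fun y => ?_) x
  · rw [Function.comp_apply, Equiv.swap_apply_of_ne_of_ne (Fin.castSucc_lt_last a).ne'
      (Fin.castSucc_lt_last b).ne', Fin.snoc_last, Fin.snoc_last]
  · rw [Function.comp_apply, Fin.castSucc_injective _ |>.swap_apply, Fin.snoc_castSucc,
      Fin.snoc_castSucc, Function.comp_apply]

def Fin.snocNe {α : Type*} {q : ℕ} (b : Fin q) (f : {x : Fin q // x ≠ b} → α) (l : α) :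
    {x : Fin (q + 1) // x ≠ b.castSucc} → α :=
  fun x => if hx : x.1 = Fin.last q then l
    else f ⟨x.1.castPred hx, fun h => x.2 (by rw [← Fin.castSucc_castPred x.1 hx, h])⟩

theorem Fin.dite_castSucc_snocNe {α : Type*} {q : ℕ} (b : Fin q) (f : {x : Fin q // x ≠ b} → α)
    (k l : α) :
    (fun x : Fin (q + 1) => if h : x = b.castSucc then k else Fin.snocNe b f l ⟨x, h⟩) =
      Fin.snoc (fun x : Fin q => if h : x = b then k else f ⟨x, h⟩) l := by
  funext x
  refine Fin.lastCases ?_ (fun y => ?_) x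
  · simp [Fin.snocNe, (Fin.castSucc_lt_last b).ne']
  · by_cases hyb : y = b
    · simp [hyb]
    · simp [Fin.snocNe, hyb, (Fin.castSucc_lt_last y).ne]

theorem ptraceAt_permOp_swap_mul_ptraceLast_apply (d q : ℕ) (a b : Fin q)
    (A : Matrix (Fin (q + 1) → Fin d) (Fin (q + 1) → Fin d) ℂ)
    (f g : {x : Fin q // x ≠ b} → Fin d) :
    ptraceAt q d b (permOp q d (Equiv.swap a b) * ptraceLast A) f g =
      ∑ l, ptraceAt (q + 1) d b.castSucc
        (permOp (q + 1) d (Equiv.swap a.castSucc b.castSucc) * A)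
        (Fin.snocNe b f l) (Fin.snocNe b g l) := by
  simp only [ptraceAt, permOp_mul_apply, ptraceLast_apply, Fin.dite_castSucc_snocNe,
    Fin.snoc_comp_swap_castSucc]
  exact Finset.sum_comm

theorem ptraceAt_permOp_mul_smul_sum {ι : Type*} (m d : ℕ) (b : Fin m) (σ : Equiv.Perm (Fin m))
    (c : ℂ) (s : Finset ι) (X : ι → Matrix (Fin m → Fin d) (Fin m → Fin d) ℂ) :
    ptraceAt m d b (permOp m d σ * (c • ∑ i ∈ s, X i)) =
      c • ∑ i ∈ s, ptraceAt m d b (permOp m d σ * X i) := by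
  ext f g
  simp only [ptraceAt, Matrix.mul_smul, Matrix.smul_apply, Matrix.sum_apply,
    smul_eq_mul, Finset.mul_sum]
  exact Finset.sum_comm

theorem Feasible.of_succ {d n q : ℕ} {M : Fin n → Matrix (Fin d) (Fin d) ℂ} {t : ℝ}
    (h : Feasible d n (q + 1) M t) : Feasible d n q M t := by
  classical
  obtain ⟨R, hPSD, hMarg, hSwap⟩ := h
  let c : ℂ := ((d : ℝ)⁻¹ : ℝ)
  refine ⟨fun ι => c • ∑ w, ptraceLast (R (Fin.snoc ι w)), fun ι => ?_, fun j v => ?_,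
    fun a b ι hab hι => ?_⟩
  · exact (posSemidef_sum _ fun w _ => (hPSD _).ptraceLast).smul
      (Complex.zero_le_real.mpr (by positivity))
  · rcases eq_or_ne d 0 with rfl | hd
    · ext f
      exact (f j).elim0
    have hc : c * d = 1 := by simp [c, hd]
    simp_rw [← Finset.smul_sum, ← map_sum, Fin.sum_filter_castSucc_snoc (fun κ => R κ) j v,
      hMarg, ptraceLast_tensorPow]
    simp only [Fin.castSucc_inj, if_neg (Fin.castSucc_lt_last j).ne', Matrix.trace_one,
      Fintype.card_fin, smul_smul, hc, one_smul]
  · have hab' : a.castSucc ≠ b.castSucc := Fin.castSucc_injective q |>.ne hab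
    rw [ptraceAt_permOp_mul_smul_sum]
    refine smul_eq_zero_of_right c (Finset.sum_eq_zero fun w _ => ?_)
    ext f g
    rw [ptraceAt_permOp_swap_mul_ptraceLast_apply]
    refine Finset.sum_eq_zero fun l _ => ?_
    rw [hSwap _ _ _ hab' (by simpa using hι), Matrix.zero_apply]

theorem Hval_mono {d n m m' : ℕ} {M : Fin n → Matrix (Fin d) (Fin d) ℂ}
    (h : ∀ t, Feasible d n m' M t → Feasible d n m M t) : Hval d n m' M ≤ Hval d n m M := by
  rcases Set.eq_empty_or_nonempty {t : ℝ | 0 ≤ t ∧ t ≤ 1 ∧ Feasible d n m' M t}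
    with hempty | hne
  · rw [Hval, hempty, Real.sSup_empty]
    exact Real.sSup_nonneg fun t ht => ht.1
  · exact csSup_le_csSup ⟨1, fun t ht => ht.2.1⟩ hne fun t ⟨h0, h1, ht⟩ => ⟨h0, h1, h t ht⟩

theorem hierarchy_monotone_general (d n q : ℕ)
    (M : Fin n → Matrix (Fin d) (Fin d) ℂ) :
    Hval d n (q + 1) M ≤ Hval d n q M :=
  Hval_mono fun _ => Feasible.of_succ

/-- Monotonicity of the hierarchy: higher levels yield better (smaller) bounds;
`H_{q+1}(M) ≤ H_q(M)`. -/
theorem hierarchy_monotone (d n q : ℕ) (hq : 2 ≤ q)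
    (M : Fin n → Matrix (Fin d) (Fin d) ℂ) (hM : IsPOVM d n M) :
    Hval d n (q + 1) M ≤ Hval d n q M :=
  hierarchy_monotone_general d n q M
end
end

section
/- If operators A^0,...,A^{n−1} on C^d ⊗ C^d satisfy the dual feasibility condition A^i + V A^j V + (I⊗D^{ij} V + h.c.) ≥ 0 for all i,j and some matrices D^{ij} with D^{ij}=(D^{ji})† and D^{ii}=0, then the witness operators W_i = Tr_2 A^i satisfy Σ_i Tr(W_i M_i) ≥ 0 for every projectively simulable POVM (M_0,...,M_{n−1}). -/
open Matrix Kronecker BigOperators ComplexOrder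

noncomputable section

/-- Partial trace over the second tensor factor. -/
def ptrace2 (d : ℕ) (M : Matrix (Fin d × Fin d) (Fin d × Fin d) ℂ) :
    Matrix (Fin d) (Fin d) ℂ :=
  fun i j => ∑ k, M (i, k) (j, k)

/-!
Convexity reduces the claim to a single projective measurement `P`. Pairing the dual
feasibility operator for `(i, j)` with `P i ⊗ P j ≥ 0` and summing over all `i, j` gives a
nonnegative number. The `D`-terms drop out: the trace of `(I ⊗ D^{ij}) V` against `P i ⊗ P j`
is `Tr (D^{ij} P i P j)`, which vanishes because `P i P j = 0` for `i ≠ j` and `D^{ii} = 0`, and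
its Hermitian conjugate contributes the complex conjugate. Conjugating by the swap exchanges the
tensor factors, and `∑ j P j = 1` turns each of the two remaining double sums into
`∑ i Tr (W_i P i)`.
-/

variable {d n : ℕ}

lemma swapOp_mul_kronecker (X Y : Matrix (Fin d) (Fin d) ℂ) :
    swapOp d * (X ⊗ₖ Y) = (Y ⊗ₖ X) * swapOp d := by
  ext ⟨a, b⟩ ⟨c, e⟩
  simp [swapOp, mul_apply, Fintype.sum_prod_type, ite_and, mul_comm]

lemma swapOp_mul_swapOp : swapOp d * swapOp d = 1 := by
  ext ⟨a, b⟩ ⟨c, e⟩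
  simp [swapOp, mul_apply, Fintype.sum_prod_type, ite_and, one_apply, Prod.ext_iff]

lemma trace_kronecker_mul_swapOp (X Y : Matrix (Fin d) (Fin d) ℂ) :
    ((X ⊗ₖ Y) * swapOp d).trace = (X * Y).trace := by
  simp [trace, mul_apply, swapOp, Fintype.sum_prod_type, ite_and]

lemma trace_swapOp_mul_mul_swapOp_mul_kronecker (B : Matrix (Fin d × Fin d) (Fin d × Fin d) ℂ)
    (X Y : Matrix (Fin d) (Fin d) ℂ) :
    (swapOp d * B * swapOp d * (X ⊗ₖ Y)).trace = (B * (Y ⊗ₖ X)).trace := by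
  rw [Matrix.mul_assoc, swapOp_mul_kronecker, ← Matrix.mul_assoc, trace_mul_comm]
  simp only [← Matrix.mul_assoc, swapOp_mul_swapOp, Matrix.one_mul]

lemma trace_one_kronecker_mul_swapOp_mul_kronecker (E X Y : Matrix (Fin d) (Fin d) ℂ) :
    ((1 ⊗ₖ E) * swapOp d * (X ⊗ₖ Y)).trace = (E * X * Y).trace := by
  rw [Matrix.mul_assoc, swapOp_mul_kronecker, ← Matrix.mul_assoc, ← mul_kronecker_mul,
    trace_kronecker_mul_swapOp, Matrix.one_mul, trace_mul_comm, Matrix.mul_assoc]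

lemma trace_mul_kronecker_one (B : Matrix (Fin d × Fin d) (Fin d × Fin d) ℂ)
    (X : Matrix (Fin d) (Fin d) ℂ) :
    (B * (X ⊗ₖ (1 : Matrix (Fin d) (Fin d) ℂ))).trace = (ptrace2 d B * X).trace := by
  simp only [trace, diag_apply, mul_apply, kroneckerMap_apply, one_apply, mul_ite, mul_one,
    mul_zero, Fintype.sum_prod_type, Finset.sum_ite_eq', Finset.mem_univ, ↓reduceIte, ptrace2,
    Finset.sum_mul]
  exact Finset.sum_congr rfl fun _ _ => Finset.sum_comm

lemma Matrix.trace_conjTranspose_mul_of_isHermitian {m α : Type*} [Fintype m] [CommSemiring α]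
    [StarRing α] (B : Matrix m m α) {R : Matrix m m α} (hR : R.IsHermitian) :
    (Bᴴ * R).trace = star (B * R).trace := by
  rw [← trace_conjTranspose, conjTranspose_mul, hR.eq, trace_mul_comm]

lemma Matrix.PosSemidef.trace_mul_nonneg {m 𝕜 : Type*} [Fintype m] [DecidableEq m] [RCLike 𝕜]
    {X Y : Matrix m m 𝕜} (hX : X.PosSemidef) (hY : Y.PosSemidef) : 0 ≤ (X * Y).trace := by
  open MatrixOrder in obtain ⟨B, rfl⟩ := CStarAlgebra.nonneg_iff_eq_star_mul_self.mp hY.nonneg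
  rw [star_eq_conjTranspose, ← Matrix.mul_assoc, trace_mul_cycle]
  exact (hX.mul_mul_conjTranspose_same B).trace_nonneg

lemma IsProjMeas.posSemidef_s14 {P : Fin n → Matrix (Fin d) (Fin d) ℂ} (hP : IsProjMeas d n P)
    (i : Fin n) : (P i).PosSemidef := by
  have hsq : P i = (P i)ᴴ * P i := by simpa [hP.1 i] using (hP.2.1 i i).symm
  exact hsq ▸ posSemidef_conjTranspose_mul_self (P i)

lemma IsProjMeas.sum_trace_mul_kronecker (B : Matrix (Fin d × Fin d) (Fin d × Fin d) ℂ)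
    (X : Matrix (Fin d) (Fin d) ℂ) {P : Fin n → Matrix (Fin d) (Fin d) ℂ}
    (hP : IsProjMeas d n P) :
    ∑ j, (B * (X ⊗ₖ P j)).trace = (ptrace2 d B * X).trace := by
  rw [← trace_mul_kronecker_one, ← hP.2.2, ← trace_sum, ← Matrix.mul_sum]
  exact congrArg (fun K => (B * K).trace) (map_sum (kroneckerBilinear (R := ℂ) X) P _).symm

def dualFeasOp (A : Fin n → Matrix (Fin d × Fin d) (Fin d × Fin d) ℂ)
    (D : Fin n → Fin n → Matrix (Fin d) (Fin d) ℂ) (i j : Fin n) :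
    Matrix (Fin d × Fin d) (Fin d × Fin d) ℂ :=
  A i + swapOp d * A j * swapOp d +
    (((1 : Matrix (Fin d) (Fin d) ℂ) ⊗ₖ D i j) * swapOp d +
      (((1 : Matrix (Fin d) (Fin d) ℂ) ⊗ₖ D i j) * swapOp d)ᴴ)

lemma IsProjMeas.trace_dualFeasOp_mul_kronecker {P : Fin n → Matrix (Fin d) (Fin d) ℂ}
    (hP : IsProjMeas d n P) (A : Fin n → Matrix (Fin d × Fin d) (Fin d × Fin d) ℂ)
    {D : Fin n → Fin n → Matrix (Fin d) (Fin d) ℂ} (hDii : ∀ i, D i i = 0) (i j : Fin n) :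
    (dualFeasOp A D i j * (P i ⊗ₖ P j)).trace =
      (A i * (P i ⊗ₖ P j)).trace + (A j * (P j ⊗ₖ P i)).trace := by
  have hcross : ((1 ⊗ₖ D i j) * swapOp d * (P i ⊗ₖ P j)).trace = 0 := by
    rw [trace_one_kronecker_mul_swapOp_mul_kronecker, Matrix.mul_assoc, hP.2.1 i j]
    split_ifs with h
    · simp [h, hDii]
    · simp
  have hherm : (P i ⊗ₖ P j).IsHermitian :=
    ((hP.posSemidef_s14 i).kronecker (hP.posSemidef_s14 j)).isHermitian
  rw [dualFeasOp, add_mul, add_mul, add_mul, trace_add, trace_add, trace_add,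
    trace_conjTranspose_mul_of_isHermitian _ hherm, hcross,
    trace_swapOp_mul_mul_swapOp_mul_kronecker, star_zero, add_zero, add_zero]

lemma IsProjMeas.sum_trace_ptrace2_mul_nonneg {P : Fin n → Matrix (Fin d) (Fin d) ℂ}
    (hP : IsProjMeas d n P)
    {A : Fin n → Matrix (Fin d × Fin d) (Fin d × Fin d) ℂ}
    {D : Fin n → Fin n → Matrix (Fin d) (Fin d) ℂ} (hDii : ∀ i, D i i = 0)
    (hfeas : ∀ i j, (dualFeasOp A D i j).PosSemidef) :
    0 ≤ ∑ i, (ptrace2 d (A i) * P i).trace := by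
  have hpaired : 0 ≤ ∑ i, ∑ j, (dualFeasOp A D i j * (P i ⊗ₖ P j)).trace :=
    Finset.sum_nonneg fun i _ => Finset.sum_nonneg fun j _ =>
      (hfeas i j).trace_mul_nonneg ((hP.posSemidef_s14 i).kronecker (hP.posSemidef_s14 j))
  have hdouble : ∑ i, ∑ j, (dualFeasOp A D i j * (P i ⊗ₖ P j)).trace =
      2 * ∑ i, (ptrace2 d (A i) * P i).trace := by
    simp only [hP.trace_dualFeasOp_mul_kronecker A hDii, Finset.sum_add_distrib]
    rw [Finset.sum_comm (f := fun i j => (A j * (P j ⊗ₖ P i)).trace)]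
    simp only [hP.sum_trace_mul_kronecker]
    ring
  rw [hdouble] at hpaired
  simpa using mul_nonneg (by positivity : (0 : ℂ) ≤ 2⁻¹) hpaired

theorem witness_nonneg_on_simulable_general (d n : ℕ)
    (A : Fin n → Matrix (Fin d × Fin d) (Fin d × Fin d) ℂ)
    (D : Fin n → Fin n → Matrix (Fin d) (Fin d) ℂ)
    (hDii : ∀ i, D i i = 0)
    (hfeas : ∀ i j,
      (A i + swapOp d * A j * swapOp d +
        ((((1 : Matrix (Fin d) (Fin d) ℂ) ⊗ₖ D i j) * swapOp d) +
         (((1 : Matrix (Fin d) (Fin d) ℂ) ⊗ₖ D i j) * swapOp d)ᴴ)).PosSemidef)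
    (M : Fin n → Matrix (Fin d) (Fin d) ℂ) (hM : Simulable d n M) :
    0 ≤ (∑ i, (ptrace2 d (A i) * M i).trace).re ∧
    (∑ i, (ptrace2 d (A i) * M i).trace).im = 0 := by
  obtain ⟨N, p, P, hp, -, hproj, hmix⟩ := hM
  have hvalue : ∑ i, (ptrace2 d (A i) * M i).trace =
      ∑ k, (p k : ℂ) * ∑ i, (ptrace2 d (A i) * P k i).trace := by
    simp only [hmix, Finset.mul_sum, Matrix.mul_smul, trace_sum, trace_smul, smul_eq_mul]
    exact Finset.sum_comm
  have hnonneg : 0 ≤ ∑ i, (ptrace2 d (A i) * M i).trace :=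
    hvalue ▸ Finset.sum_nonneg fun k _ =>
      mul_nonneg (Complex.zero_le_real.mpr (hp k))
        ((hproj k).sum_trace_ptrace2_mul_nonneg hDii hfeas)
  obtain ⟨hre, him⟩ := Complex.nonneg_iff.mp hnonneg
  exact ⟨hre, him.symm⟩

/-- Non-simulability witnesses: if the `A^i` satisfy the dual feasibility condition
`A^i + V A^j V + (I ⊗ D^{ij}) V + h.c. ≥ 0` for some `D^{ij}` with `D^{ij} = (D^{ji})†`
and `D^{ii} = 0`, then the witness operators `W_i = Tr_2 A^i` satisfy
`Σ_i Tr(W_i M_i) ≥ 0` for every projectively simulable POVM `M`. -/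
theorem witness_nonneg_on_simulable (d n : ℕ)
    (A : Fin n → Matrix (Fin d × Fin d) (Fin d × Fin d) ℂ)
    (D : Fin n → Fin n → Matrix (Fin d) (Fin d) ℂ)
    (hD : ∀ i j, D i j = (D j i)ᴴ) (hDii : ∀ i, D i i = 0)
    (hfeas : ∀ i j,
      (A i + swapOp d * A j * swapOp d +
        ((((1 : Matrix (Fin d) (Fin d) ℂ) ⊗ₖ D i j) * swapOp d) +
         (((1 : Matrix (Fin d) (Fin d) ℂ) ⊗ₖ D i j) * swapOp d)ᴴ)).PosSemidef)
    (M : Fin n → Matrix (Fin d) (Fin d) ℂ) (hM : Simulable d n M) :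
    0 ≤ (∑ i, (ptrace2 d (A i) * M i).trace).re ∧
    (∑ i, (ptrace2 d (A i) * M i).trace).im = 0 :=
  witness_nonneg_on_simulable_general d n A D hDii hfeas M hM
end
end
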